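/- Let H be a subgroup of a finite group G, V an F H-module with char F not dividing |G|, W = Ind_H^G V = ⊕_{g∈C} g·V for a set C of left coset representatives with 1 ∈ C, and π : S(W) → S(V) the algebra surjection extending the projection W → V with kernel ⊕_{g≠1} g·V. Then π(S(W)^G) = S(V)^H. -/

import Mathlib

/-!
Write `g ∈ G` as `g = c h` with `c ∈ C` and `h ∈ H`. Since `σ h ∘ ι = ι ∘ ρ h` and `π` kills the
linear forms on `c·V` for `c ≠ 1`, the map `q ↦ π (g · ι q)` is `ρ h` when `g ∈ H` (then `c = 1`)
and sends `q` to its constant term otherwise. On linear forms, which span `W`, this says that `π` is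
`H`-equivariant, whence `π(S(W)^G) ⊆ S(V)^H`. Conversely, if `f ∈ S(V)^H` has no constant term,
then `∑_g g · ι f` is `G`-invariant and `π` maps it to `|H| f`, and `|H|` is invertible in `F`
because it divides `|G|`.
-/

noncomputable section
open MvPolynomial

variable {F : Type} [Field F]

/-- The algebra homomorphism between polynomial algebras (viewed as symmetric algebras)
induced by a linear map between the spaces of variables (the degree one components). -/
noncomputable def algOf {α β : Type} [Fintype α] [Fintype β] [DecidableEq α]
    (f : (α → F) →ₗ[F] (β → F)) :
    MvPolynomial α F →ₐ[F] MvPolynomial β F :=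
  aeval fun j => ∑ i, f (Pi.single j 1) i • X i

/-- The embedding of the space of linear forms into the polynomial algebra. -/
noncomputable def lin {β : Type} [Fintype β] (w : β → F) : MvPolynomial β F :=
  ∑ i, w i • X i

/-- The subalgebra of `G`-invariants of the symmetric algebra of a representation. -/
def invariants {G : Type} [Group G] {α : Type} [Fintype α] [DecidableEq α]
    (ρ : Representation F G (α → F)) : Subalgebra F (MvPolynomial α F) where
  carrier := {p | ∀ g : G, algOf (ρ g) p = p}
  mul_mem' := fun ha hb g => by rw [map_mul, ha g, hb g]
  add_mem' := fun ha hb g => by rw [map_add, ha g, hb g]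
  algebraMap_mem' := fun r g => (algOf (ρ g)).commutes r

variable {G : Type} [Group G] {α : Type} [Fintype α] [DecidableEq α]

/-- The invariant ring is generated as an `F`-algebra in degrees at most `d`. -/
def genLE (ρ : Representation F G (α → F)) (d : ℕ) : Prop :=
  Algebra.adjoin F {p : MvPolynomial α F | p ∈ invariants ρ ∧ p.totalDegree ≤ d}
    = invariants ρ

/-- The Noether number `β(G,W)` of a representation. -/
def noether (ρ : Representation F G (α → F)) : ℕ := sInf {d | genLE ρ d}

/-- The Hilbert ideal: the ideal of `S(W)` generated by the invariants of positive degree. -/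
def hilbertIdeal (ρ : Representation F G (α → F)) : Ideal (MvPolynomial α F) :=
  Ideal.span {p | p ∈ invariants ρ ∧ constantCoeff p = 0}

/-- `b(G,W)`: the top degree of the algebra of coinvariants `S(W)/S(W)₊^G S(W)`. -/
def coinvTop (ρ : Representation F G (α → F)) : ℕ :=
  sSup {d | ∃ p : MvPolynomial α F, p.IsHomogeneous d ∧ p ∉ hilbertIdeal ρ}

/-- `b_k(G,W)`: the top degree of `S(W)/((S(W)₊^G)^k S(W))`. -/
def coinvTopK (ρ : Representation F G (α → F)) (k : ℕ) : ℕ :=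
  sSup {d | ∃ p : MvPolynomial α F, p.IsHomogeneous d ∧ p ∉ (hilbertIdeal ρ) ^ k}

/-- The span of all products of `k` positive-degree invariants,
i.e. `(S(W)₊^G)^k` computed inside the invariant ring. -/
def prodPow (ρ : Representation F G (α → F)) (k : ℕ) : Submodule F (MvPolynomial α F) :=
  Submodule.span F {x | ∃ f : Fin k → MvPolynomial α F,
    (∀ i, f i ∈ invariants ρ ∧ constantCoeff (f i) = 0) ∧ x = ∏ i, f i}

/-- The `k`-th Noether number `β_k(G,W)`, the top degree of `S(W)^G/(S(W)₊^G)^{k+1}`. -/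
def noetherK (ρ : Representation F G (α → F)) (k : ℕ) : ℕ :=
  sSup {d | ∃ p, p ∈ invariants ρ ∧ p.IsHomogeneous d ∧ p ∉ prodPow ρ (k+1)}

/-- `β(G)`: the supremum of the Noether numbers over all finite dimensional modules. -/
def noetherSup (F G : Type) [Field F] [Group G] : ℕ∞ :=
  ⨆ (n : ℕ) (ρ : Representation F G (Fin n → F)), (noether ρ : ℕ∞)

/-- `b(G)`: the supremum of `b(G,W)` over all finite dimensional modules. -/
def coinvSup (F G : Type) [Field F] [Group G] : ℕ∞ :=
  ⨆ (n : ℕ) (ρ : Representation F G (Fin n → F)), (coinvTop ρ : ℕ∞)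

/-- `β_k(G)`: the supremum of the `k`-th Noether numbers over all modules. -/
def noetherKSup (F G : Type) [Field F] [Group G] (k : ℕ) : ℕ∞ :=
  ⨆ (n : ℕ) (ρ : Representation F G (Fin n → F)), (noetherK ρ k : ℕ∞)

def linMap {β : Type} [Fintype β] : (β → F) →ₗ[F] MvPolynomial β F where
  toFun := lin
  map_add' a b := by simp [lin, add_smul, Finset.sum_add_distrib]
  map_smul' r a := by simp [lin, smul_smul, Finset.smul_sum]

theorem lin_single {β : Type} [Fintype β] [DecidableEq β] (j : β) :
    lin (Pi.single j (1 : F)) = X j := by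
  simp [lin, Pi.single_apply, ite_smul]

theorem constantCoeff_lin {β : Type} [Fintype β] (w : β → F) :
    constantCoeff (lin w) = 0 := by
  simp [lin]

theorem algOf_X {β : Type} [Fintype β] (f : (α → F) →ₗ[F] (β → F)) (j : α) :
    algOf f (X j) = lin (f (Pi.single j 1)) := by
  simp [algOf, lin]

theorem algOf_lin {β : Type} [Fintype β] (f : (α → F) →ₗ[F] (β → F)) (w : α → F) :
    algOf f (lin w) = lin (f w) := by
  change algOf f (linMap w) = linMap (f w)
  conv_lhs => rw [pi_eq_sum_univ' w]
  conv_rhs => rw [pi_eq_sum_univ' w]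
  simp only [map_sum, map_smul]
  refine Finset.sum_congr rfl fun i _ => congrArg _ ?_
  exact (congrArg _ (lin_single i)).trans (algOf_X f i)

theorem algOf_comp {β γ : Type} [Fintype β] [Fintype γ] [DecidableEq β]
    (f : (β → F) →ₗ[F] (γ → F)) (g : (α → F) →ₗ[F] (β → F)) :
    algOf (f ∘ₗ g) = (algOf f).comp (algOf g) :=
  algHom_ext fun j => by rw [AlgHom.comp_apply, algOf_X, algOf_X, algOf_lin]; rfl

theorem algOf_id : algOf (LinearMap.id : (α → F) →ₗ[F] (α → F)) = AlgHom.id F _ :=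
  algHom_ext fun j => by rw [algOf_X, LinearMap.id_apply, lin_single, AlgHom.id_apply]

theorem algOf_map_one (ρ : Representation F G (α → F)) : algOf (ρ 1) = AlgHom.id F _ := by
  rw [map_one, Module.End.one_eq_id, algOf_id]

theorem algOf_map_mul (ρ : Representation F G (α → F)) (g h : G) :
    algOf (ρ (g * h)) = (algOf (ρ g)).comp (algOf (ρ h)) := by
  rw [map_mul, Module.End.mul_eq_comp, algOf_comp]

theorem AlgHom.eq_algebraMap_constantCoeff {κ B : Type} [CommSemiring B] [Algebra F B]
    (ψ : MvPolynomial κ F →ₐ[F] B) (h : ∀ j, ψ (X j) = 0) (p : MvPolynomial κ F) :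
    ψ p = algebraMap F B (constantCoeff p) := by
  rw [aeval_unique ψ, show ⇑ψ ∘ X = fun _ => 0 from funext h, aeval_zero']

theorem constantCoeff_algOf {β : Type} [Fintype β] (f : (α → F) →ₗ[F] (β → F))
    (p : MvPolynomial α F) : constantCoeff (algOf f p) = constantCoeff p := by
  induction p using MvPolynomial.induction_on with
  | C a => rw [← algebraMap_eq, AlgHom.commutes, algebraMap_eq, algebraMap_eq, constantCoeff_C,
      constantCoeff_C]
  | add p q hp hq => rw [map_add, map_add, hp, hq, map_add]
  | mul_X p j hp => rw [map_mul, map_mul, hp, algOf_X, constantCoeff_lin, map_mul, constantCoeff_X]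

theorem sum_algOf_mem_invariants [Fintype G] (ρ : Representation F G (α → F))
    (p : MvPolynomial α F) : ∑ g, algOf (ρ g) p ∈ invariants ρ := fun g' => by
  simp only [map_sum, ← AlgHom.comp_apply, ← algOf_map_mul]
  exact Fintype.sum_bijective (g' * ·) (Group.mulLeft_bijective g') _ _ fun _ => rfl

theorem map_algOf_algOf_eq_algebraMap_constantCoeff {β γ δ : Type} [Fintype β] [Fintype γ]
    [DecidableEq β] [DecidableEq γ] (ψ : MvPolynomial γ F →ₐ[F] MvPolynomial δ F)
    (s : (γ → F) →ₗ[F] (γ → F)) (ι : (β → F) →ₗ[F] (γ → F))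
    (hψ : ∀ v, ψ (lin (s (ι v))) = 0) (q : MvPolynomial β F) :
    ψ (algOf s (algOf ι q)) = algebraMap F _ (constantCoeff q) :=
  (ψ.comp ((algOf s).comp (algOf ι))).eq_algebraMap_constantCoeff
    (fun j => by rw [AlgHom.comp_apply, AlgHom.comp_apply, algOf_X, algOf_lin]; exact hψ _) q

theorem natCast_card_subgroup_ne_zero [Fintype G] (hchar : (Fintype.card G : F) ≠ 0)
    (H : Subgroup G) : (Nat.card H : F) ≠ 0 := by
  obtain ⟨k, hk⟩ := Subgroup.card_subgroup_dvd_card H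
  rw [Nat.card_eq_fintype_card (α := G)] at hk
  exact left_ne_zero_of_mul (by rwa [hk, Nat.cast_mul] at hchar)

section Induced

variable {H : Subgroup G} {nV m : ℕ} {ρ : Representation F H (Fin nV → F)}
  {σ : Representation F G (Fin m → F)} {ι : (Fin nV → F) →ₗ[F] (Fin m → F)}
  {π : MvPolynomial (Fin m) F →ₐ[F] MvPolynomial (Fin nV) F}

theorem algOf_mul_coe_algOf (hequiv : ∀ h : H, σ h ∘ₗ ι = ι ∘ₗ ρ h) (x : G) (h : H)
    (q : MvPolynomial (Fin nV) F) :
    algOf (σ (x * h)) (algOf ι q) = algOf (σ x) (algOf ι (algOf (ρ h) q)) := by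
  rw [algOf_map_mul, AlgHom.comp_apply, ← AlgHom.comp_apply (algOf (σ h)), ← algOf_comp, hequiv,
    algOf_comp, AlgHom.comp_apply]

open scoped Classical in
theorem proj_algOf_algOf {C : Set G} (hequiv : ∀ h : H, σ h ∘ₗ ι = ι ∘ₗ ρ h)
    (hC : Subgroup.IsComplement C (H : Set G)) (h1 : (1 : G) ∈ C)
    (hπ1 : π.comp (algOf ι) = AlgHom.id F (MvPolynomial (Fin nV) F))
    (hπ2 : ∀ c ∈ C, c ≠ 1 → ∀ v : Fin nV → F, π (lin (σ c (ι v))) = 0)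
    (g : G) (q : MvPolynomial (Fin nV) F) :
    π (algOf (σ g) (algOf ι q)) =
      if hg : g ∈ H then algOf (ρ ⟨g, hg⟩) q else algebraMap F _ (constantCoeff q) := by
  have hcg : ((hC.equiv g).1 : G) = 1 ↔ g ∈ H := hC.coe_equiv_fst_eq_one_iff_mem h1
  have hgch := hC.equiv_fst_mul_equiv_snd g
  generalize hC.equiv g = x at hcg hgch
  obtain ⟨⟨c, hcC⟩, ⟨h, hhH⟩⟩ := x
  subst hgch
  dsimp only at hcg
  rw [algOf_mul_coe_algOf hequiv c ⟨h, hhH⟩]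
  split_ifs with hgH
  · obtain rfl : c = 1 := hcg.2 hgH
    rw [algOf_map_one, AlgHom.id_apply, ← AlgHom.comp_apply π, hπ1, AlgHom.id_apply]
    simp_rw [one_mul]
  · rw [map_algOf_algOf_eq_algebraMap_constantCoeff π _ ι (hπ2 c hcC (mt hcg.1 hgH)),
      constantCoeff_algOf]

open scoped Classical in
theorem proj_comp_algOf_eq {C : Set G}
    (hproj : ∀ (g : G) (q : MvPolynomial (Fin nV) F), π (algOf (σ g) (algOf ι q)) =
      if hg : g ∈ H then algOf (ρ ⟨g, hg⟩) q else algebraMap F _ (constantCoeff q))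
    (hspan : ⨆ c : C, (LinearMap.range ι).map (σ c.1) = ⊤) (h : H) :
    π.comp (algOf (σ h)) = (algOf (ρ h)).comp π := by
  have hlin : (π.comp (algOf (σ h))).toLinearMap ∘ₗ linMap =
      ((algOf (ρ h)).comp π).toLinearMap ∘ₗ linMap := by
    rw [← LinearMap.eqLocus_eq_top, eq_top_iff, ← hspan]
    refine iSup_le fun c => ?_
    rintro _ ⟨_, ⟨v, rfl⟩, rfl⟩
    change π (algOf (σ h) (lin (σ c (ι v)))) = algOf (ρ h) (π (lin (σ c (ι v))))
    rw [← algOf_lin (σ c), ← algOf_lin ι, ← AlgHom.comp_apply (algOf (σ h)), ← algOf_map_mul,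
      hproj, hproj]
    by_cases hcH : (c : G) ∈ H
    · rw [dif_pos (H.mul_mem h.2 hcH), dif_pos hcH, ← AlgHom.comp_apply, ← algOf_map_mul]
      rfl
    · rw [dif_neg (mt (H.mul_mem_cancel_left h.2).1 hcH), dif_neg hcH, AlgHom.commutes]
  exact algHom_ext fun j => by rw [← lin_single]; exact LinearMap.congr_fun hlin (Pi.single j 1)

theorem map_invariants_le
    (hπ : ∀ h : H, π.comp (algOf (σ h)) = (algOf (ρ h)).comp π) :
    (invariants σ).map π ≤ invariants ρ := by
  rintro _ ⟨q, hq, rfl⟩ h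
  change algOf (ρ h) (π q) = π q
  rw [← AlgHom.comp_apply, ← hπ, AlgHom.comp_apply, hq]

open scoped Classical in
theorem invariants_le_map [Fintype G] (hH : (Nat.card H : F) ≠ 0)
    (hproj : ∀ (g : G) (q : MvPolynomial (Fin nV) F), π (algOf (σ g) (algOf ι q)) =
      if hg : g ∈ H then algOf (ρ ⟨g, hg⟩) q else algebraMap F _ (constantCoeff q)) :
    invariants ρ ≤ (invariants σ).map π := by
  intro f hf
  set f₀ := f - algebraMap F _ (constantCoeff f)
  have hf₀ : constantCoeff f₀ = 0 := by simp [f₀]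
  have hf₀H (h : H) : algOf (ρ h) f₀ = f₀ := by rw [map_sub, hf h, AlgHom.commutes]
  have hsum : π (∑ g, algOf (σ g) (algOf ι f₀)) = (Nat.card H : F) • f₀ := by
    simp only [map_sum, hproj, hf₀H, hf₀, map_zero, dite_eq_ite]
    rw [Finset.sum_ite, Finset.sum_const_zero, add_zero, Finset.sum_const,
      Nat.card_eq_fintype_card, Fintype.card_subtype, Nat.cast_smul_eq_nsmul]
  refine Subalgebra.mem_map.2
    ⟨(Nat.card H : F)⁻¹ • ∑ g, algOf (σ g) (algOf ι f₀) + algebraMap F _ (constantCoeff f),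
    add_mem (Subalgebra.smul_mem _ (sum_algOf_mem_invariants σ _) _)
      (Subalgebra.algebraMap_mem _ _), ?_⟩
  rw [map_add, map_smul, hsum, inv_smul_smul₀ hH, AlgHom.commutes, sub_add_cancel]

end Induced

theorem stmt6_general
    {G : Type} [Group G] [Fintype G]
    (hchar : (Fintype.card G : F) ≠ 0)
    (H : Subgroup G) {nV m : ℕ}
    (ρ : Representation F H (Fin nV → F))
    (σ : Representation F G (Fin m → F))
    (ι : (Fin nV → F) →ₗ[F] (Fin m → F))
    (hequiv : ∀ h : H, σ h ∘ₗ ι = ι ∘ₗ ρ h)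
    (C : Set G) (hC : Subgroup.IsComplement C (H : Set G)) (h1 : (1:G) ∈ C)
    (hspan : ⨆ c : C, (LinearMap.range ι).map (σ c.1) = ⊤)
    (π : MvPolynomial (Fin m) F →ₐ[F] MvPolynomial (Fin nV) F)
    (hπ1 : π.comp (algOf ι) = AlgHom.id F (MvPolynomial (Fin nV) F))
    (hπ2 : ∀ c ∈ C, c ≠ 1 → ∀ v : Fin nV → F, π (lin (σ c (ι v))) = 0) :
    (invariants σ).map π = invariants ρ := by
  have hproj := proj_algOf_algOf hequiv hC h1 hπ1 hπ2
  exact le_antisymm (map_invariants_le (proj_comp_algOf_eq hproj hspan))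
    (invariants_le_map (natCast_card_subgroup_ne_zero hchar H) hproj)

/-- `π(S(W)^G) = S(V)^H`, where `π : S(W) → S(V)` is the algebra
surjection extending the projection `W → V` killing the summands `g·V`, `g ∈ C`, `g ≠ 1`. -/
theorem stmt6
    {G : Type} [Group G] [Fintype G]
    (hchar : (Fintype.card G : F) ≠ 0)
    (H : Subgroup G) {nV m : ℕ}
    (ρ : Representation F H (Fin nV → F))
    (σ : Representation F G (Fin m → F))
    (ι : (Fin nV → F) →ₗ[F] (Fin m → F)) (hι : Function.Injective ι)
    (hequiv : ∀ h : H, σ h ∘ₗ ι = ι ∘ₗ ρ h)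
    (C : Set G) (hC : Subgroup.IsComplement C (H : Set G)) (h1 : (1:G) ∈ C)
    (hindep : iSupIndep fun c : C => (LinearMap.range ι).map (σ c.1))
    (hspan : ⨆ c : C, (LinearMap.range ι).map (σ c.1) = ⊤)
    (π : MvPolynomial (Fin m) F →ₐ[F] MvPolynomial (Fin nV) F)
    (hπ1 : π.comp (algOf ι) = AlgHom.id F (MvPolynomial (Fin nV) F))
    (hπ2 : ∀ c ∈ C, c ≠ 1 → ∀ v : Fin nV → F, π (lin (σ c (ι v))) = 0) :
    (invariants σ).map π = invariants ρ :=
  stmt6_general hchar H ρ σ ι hequiv C hC h1 hspan π hπ1 hπ2
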